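/- Let a ∈ (0,1), b > 0, k > 0. If x ≥ 0 satisfies x ≤ k·x^a + b, then x ≤ k^(1/(1-a)) + b/(1-a). -/

import Mathlib

/-!
Put `y = k ^ (1 / (1 - a))`, so that `k = y ^ (1 - a)`. Weighted AM-GM gives
`k * x ^ a = x ^ a * y ^ (1 - a) ≤ a * x + (1 - a) * y`, i.e. the concave map `x ↦ k * x ^ a` lies
below its tangent at its fixed point `y`. Hence `x ≤ a * x + (1 - a) * y + b`, and dividing by
`1 - a` gives the bound.
-/

namespace Real

theorem mul_rpow_le_mul_add_one_sub_mul_rpow_one_div_one_sub {a k x : ℝ} (ha₀ : 0 ≤ a)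
    (ha₁ : a < 1) (hk : 0 ≤ k) (hx : 0 ≤ x) :
    k * x ^ a ≤ a * x + (1 - a) * k ^ (1 / (1 - a)) := by
  have hk_eq : (k ^ (1 / (1 - a))) ^ (1 - a) = k := by
    rw [one_div, rpow_inv_rpow hk (by linarith)]
  calc k * x ^ a = x ^ a * (k ^ (1 / (1 - a))) ^ (1 - a) := by rw [hk_eq, mul_comm]
    _ ≤ a * x + (1 - a) * k ^ (1 / (1 - a)) :=
      geom_mean_le_arith_mean2_weighted ha₀ (by linarith) hx (by positivity) (by ring)

theorem le_rpow_one_div_one_sub_add_div_of_le_mul_rpow_add {a b k x : ℝ} (ha₀ : 0 ≤ a)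
    (ha₁ : a < 1) (hk : 0 ≤ k) (hx : 0 ≤ x) (h : x ≤ k * x ^ a + b) :
    x ≤ k ^ (1 / (1 - a)) + b / (1 - a) := by
  have h1a : 0 < 1 - a := by linarith
  have hlin : (1 - a) * x ≤ (1 - a) * k ^ (1 / (1 - a)) + b := by
    linarith [mul_rpow_le_mul_add_one_sub_mul_rpow_one_div_one_sub ha₀ ha₁ hk hx]
  rw [← sub_le_iff_le_add', le_div_iff₀ h1a]
  linarith

end Real

theorem stmt0_general (a b k x : ℝ) (ha : a ∈ Set.Ioo (0:ℝ) 1) (hk : 0 < k)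
    (hx : 0 ≤ x) (hineq : x ≤ k * x ^ a + b) :
    x ≤ k ^ (1 / (1 - a)) + b / (1 - a) :=
  Real.le_rpow_one_div_one_sub_add_div_of_le_mul_rpow_add ha.1.le ha.2 hk.le hx hineq

theorem stmt0 (a b k x : ℝ) (ha : a ∈ Set.Ioo (0:ℝ) 1) (hb : 0 < b) (hk : 0 < k)
    (hx : 0 ≤ x) (hineq : x ≤ k * x ^ a + b) :
    x ≤ k ^ (1 / (1 - a)) + b / (1 - a) :=
  stmt0_general a b k x ha hk hx hineq
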